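/- If (Ψ, Φ) solves the Manakov-type system iΨ_t = βΨ_xx + α₁(|Ψ|² + |Φ|²)Ψ, iΦ_t = βΦ_xx + α₁(|Φ|² + |Ψ|²)Φ, and Γ is real, then ψ = Ψ cos(Γt) + iΦ sin(Γt), φ = Φ cos(Γt) + iΨ sin(Γt) solves the linearly coupled system iψ_t = βψ_xx + α₁(|ψ|² + |φ|²)ψ − Γφ, iφ_t = βφ_xx + α₁(|φ|² + |ψ|²)φ − Γψ. -/

import Mathlib

open Complex

private lemma key_norm (a b : ℂ) (θ : ℝ) :
    ‖a * Complex.cos ((θ : ℝ) : ℂ) + Complex.I * b * Complex.sin ((θ : ℝ) : ℂ)‖ ^ 2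
      + ‖b * Complex.cos ((θ : ℝ) : ℂ) + Complex.I * a * Complex.sin ((θ : ℝ) : ℂ)‖ ^ 2
    = ‖a‖ ^ 2 + ‖b‖ ^ 2 := by
  rw [← Complex.ofReal_cos, ← Complex.ofReal_sin]
  simp only [Complex.sq_norm, Complex.normSq_apply,
    Complex.add_re, Complex.add_im, Complex.mul_re, Complex.mul_im,
    Complex.I_re, Complex.I_im, Complex.ofReal_re, Complex.ofReal_im]
  nlinarith [Real.sin_sq_add_cos_sq θ]

private lemma hasDerivAt_fst' (F : ℝ × ℝ → ℂ) (hF : ContDiff ℝ (⊤ : ℕ∞) F) (x t : ℝ) :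
    HasDerivAt (fun y => F (y, t)) (fderiv ℝ F (x, t) (1, 0)) x := by
  have h1 : HasDerivAt (fun y : ℝ => (y, t)) ((1 : ℝ), (0 : ℝ)) x :=
    HasDerivAt.prodMk (hasDerivAt_id x) (hasDerivAt_const x t)
  exact ((hF.differentiable (by simp) (x, t)).hasFDerivAt).comp_hasDerivAt x h1

private lemma hasDerivAt_snd' (F : ℝ × ℝ → ℂ) (hF : ContDiff ℝ (⊤ : ℕ∞) F) (x t : ℝ) :
    HasDerivAt (fun s => F (x, s)) (fderiv ℝ F (x, t) (0, 1)) t := by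
  have h1 : HasDerivAt (fun s : ℝ => (x, s)) ((0 : ℝ), (1 : ℝ)) t :=
    HasDerivAt.prodMk (hasDerivAt_const t x) (hasDerivAt_id t)
  exact ((hF.differentiable (by simp) (x, t)).hasFDerivAt).comp_hasDerivAt t h1

private lemma diff_partial_fst (F : ℝ × ℝ → ℂ) (hF : ContDiff ℝ (⊤ : ℕ∞) F) (t : ℝ) :
    Differentiable ℝ (fun y => fderiv ℝ F (y, t) ((1 : ℝ), (0 : ℝ))) := by
  have h : ContDiff ℝ (⊤ : ℕ∞) fun p : ℝ × ℝ => fderiv ℝ F p ((1 : ℝ), (0 : ℝ)) :=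
    (ContinuousLinearMap.apply ℝ ℂ ((1 : ℝ), (0 : ℝ))).contDiff.comp (hF.fderiv_right (by simp))
  exact (h.differentiable (by simp)).comp (differentiable_id.prodMk (differentiable_const t))

private lemma main_aux (β α₁ Γ : ℝ) (Ψ Φ ψ φ : ℝ → ℝ → ℂ)
    (hΨ : ContDiff ℝ (⊤ : ℕ∞) fun p : ℝ × ℝ => Ψ p.1 p.2)
    (hΦ : ContDiff ℝ (⊤ : ℕ∞) fun p : ℝ × ℝ => Φ p.1 p.2)
    (hM1 : ∀ x t, Complex.I * deriv (fun s => Ψ x s) t =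
        (β : ℂ) * deriv (fun y => deriv (fun y' => Ψ y' t) y) x
        + (α₁ : ℂ) * ((‖Ψ x t‖ ^ 2 + ‖Φ x t‖ ^ 2 : ℝ) : ℂ) * Ψ x t)
    (hM2 : ∀ x t, Complex.I * deriv (fun s => Φ x s) t =
        (β : ℂ) * deriv (fun y => deriv (fun y' => Φ y' t) y) x
        + (α₁ : ℂ) * ((‖Φ x t‖ ^ 2 + ‖Ψ x t‖ ^ 2 : ℝ) : ℂ) * Φ x t)
    (hψ : ∀ x t, ψ x t = Ψ x t * Complex.cos ((Γ * t : ℝ) : ℂ)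
        + Complex.I * Φ x t * Complex.sin ((Γ * t : ℝ) : ℂ))
    (hφ : ∀ x t, φ x t = Φ x t * Complex.cos ((Γ * t : ℝ) : ℂ)
        + Complex.I * Ψ x t * Complex.sin ((Γ * t : ℝ) : ℂ)) :
    ∀ x t, Complex.I * deriv (fun s => ψ x s) t =
        (β : ℂ) * deriv (fun y => deriv (fun y' => ψ y' t) y) x
        + (α₁ : ℂ) * ((‖ψ x t‖ ^ 2 + ‖φ x t‖ ^ 2 : ℝ) : ℂ) * ψ x t
        - (Γ : ℂ) * φ x t := by
  intro x t
  set FΨ : ℝ × ℝ → ℂ := fun p => Ψ p.1 p.2 with hFΨ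
  set FΦ : ℝ × ℝ → ℂ := fun p => Φ p.1 p.2 with hFΦ
  set Ψx : ℝ × ℝ → ℂ := fun p => fderiv ℝ FΨ p ((1 : ℝ), (0 : ℝ)) with hΨx
  set Φx : ℝ × ℝ → ℂ := fun p => fderiv ℝ FΦ p ((1 : ℝ), (0 : ℝ)) with hΦx
  set c : ℂ := Complex.cos ((Γ * t : ℝ) : ℂ) with hc
  set s : ℂ := Complex.sin ((Γ * t : ℝ) : ℂ) with hs
  -- time derivative of cos/sin
  have hlinC : HasDerivAt (fun z : ℂ => (Γ : ℂ) * z) (Γ : ℂ) ((t : ℝ) : ℂ) := by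
    simpa using (hasDerivAt_id ((t : ℝ) : ℂ)).const_mul (Γ : ℂ)
  have hC : HasDerivAt (fun u : ℝ => Complex.cos ((Γ * u : ℝ) : ℂ)) (-s * Γ) t := by
    have := (hlinC.ccos).comp_ofReal
    simpa [hc, hs, Complex.ofReal_mul] using this
  have hS : HasDerivAt (fun u : ℝ => Complex.sin ((Γ * u : ℝ) : ℂ)) (c * Γ) t := by
    have := (hlinC.csin).comp_ofReal
    simpa [hc, hs, Complex.ofReal_mul] using this
  -- time derivatives of Ψ, Φ
  have hΨt : HasDerivAt (fun u => Ψ x u) (fderiv ℝ FΨ (x, t) ((0:ℝ), (1:ℝ))) t :=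
    hasDerivAt_snd' FΨ hΨ x t
  have hΦt : HasDerivAt (fun u => Φ x u) (fderiv ℝ FΦ (x, t) ((0:ℝ), (1:ℝ))) t :=
    hasDerivAt_snd' FΦ hΦ x t
  -- time derivative of ψ
  have hψfun : (fun u => ψ x u)
      = fun u => Ψ x u * Complex.cos ((Γ * u : ℝ) : ℂ)
        + Complex.I * Φ x u * Complex.sin ((Γ * u : ℝ) : ℂ) := funext fun u => hψ x u
  have hψt : HasDerivAt (fun u => ψ x u)
      ((fderiv ℝ FΨ (x, t) ((0:ℝ), (1:ℝ)) * c + Ψ x t * (-s * Γ))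
        + ((Complex.I * fderiv ℝ FΦ (x, t) ((0:ℝ), (1:ℝ))) * s
          + (Complex.I * Φ x t) * (c * Γ))) t := by
    rw [hψfun]
    exact (hΨt.mul hC).add ((hΦt.const_mul Complex.I).mul hS)
  -- inner spatial derivative, pointwise in y
  have hinner : ∀ y, deriv (fun y' => ψ y' t) y = Ψx (y, t) * c + (Complex.I * Φx (y, t)) * s := by
    intro y
    have h1 : HasDerivAt (fun y' => Ψ y' t) (Ψx (y, t)) y := hasDerivAt_fst' FΨ hΨ y t
    have h2 : HasDerivAt (fun y' => Φ y' t) (Φx (y, t)) y := hasDerivAt_fst' FΦ hΦ y t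
    have heq : (fun y' => ψ y' t) = fun y' => Ψ y' t * c + Complex.I * Φ y' t * s :=
      funext fun y' => hψ y' t
    rw [heq]
    exact (((h1.mul_const c).add ((h2.const_mul Complex.I).mul_const s))).deriv
  -- relate Manakov's second spatial derivative atoms
  have hΨinner : (fun y => deriv (fun y' => Ψ y' t) y) = fun y => Ψx (y, t) :=
    funext fun y => (hasDerivAt_fst' FΨ hΨ y t).deriv
  have hΦinner : (fun y => deriv (fun y' => Φ y' t) y) = fun y => Φx (y, t) :=
    funext fun y => (hasDerivAt_fst' FΦ hΦ y t).deriv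
  have d1 : HasDerivAt (fun y => Ψx (y, t)) (deriv (fun y => Ψx (y, t)) x) x :=
    ((diff_partial_fst FΨ hΨ t) x).hasDerivAt
  have d2 : HasDerivAt (fun y => Φx (y, t)) (deriv (fun y => Φx (y, t)) x) x :=
    ((diff_partial_fst FΦ hΦ t) x).hasDerivAt
  have houter : deriv (fun y => deriv (fun y' => ψ y' t) y) x
      = deriv (fun y => Ψx (y, t)) x * c + (Complex.I * deriv (fun y => Φx (y, t)) x) * s := by
    have : (fun y => deriv (fun y' => ψ y' t) y)
        = fun y => Ψx (y, t) * c + (Complex.I * Φx (y, t)) * s := funext hinner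
    rw [this]
    exact (((d1.mul_const c).add ((d2.const_mul Complex.I).mul_const s))).deriv
  -- norm identity
  have hN : (‖ψ x t‖ ^ 2 + ‖φ x t‖ ^ 2 : ℝ) = ‖Ψ x t‖ ^ 2 + ‖Φ x t‖ ^ 2 := by
    rw [hψ x t, hφ x t]
    exact key_norm (Ψ x t) (Φ x t) (Γ * t)
  -- Manakov equations with matching atoms
  have e1 := hM1 x t
  have e2 := hM2 x t
  rw [hΨinner] at e1
  rw [hΦinner] at e2
  rw [hΨt.deriv] at e1
  rw [hΦt.deriv] at e2
  rw [add_comm (‖Φ x t‖ ^ 2) (‖Ψ x t‖ ^ 2)] at e2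
  rw [hψt.deriv, houter, hN, hψ x t, hφ x t]
  linear_combination c * e1 + Complex.I * s * e2 + Φ x t * c * (Γ : ℂ) * Complex.I_sq

/-- rotation transformation maps Manakov solutions to solutions of
the linearly coupled CNLSE. -/
theorem rotated_fields_solve_linearly_coupled_CNLSE
    (β α₁ Γ : ℝ) (Ψ Φ ψ φ : ℝ → ℝ → ℂ)
    (hΨ : ContDiff ℝ (⊤ : ℕ∞) fun p : ℝ × ℝ => Ψ p.1 p.2)
    (hΦ : ContDiff ℝ (⊤ : ℕ∞) fun p : ℝ × ℝ => Φ p.1 p.2)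
    (hM1 : ∀ x t, Complex.I * deriv (fun s => Ψ x s) t =
        (β : ℂ) * deriv (fun y => deriv (fun y' => Ψ y' t) y) x
        + (α₁ : ℂ) * ((‖Ψ x t‖ ^ 2 + ‖Φ x t‖ ^ 2 : ℝ) : ℂ) * Ψ x t)
    (hM2 : ∀ x t, Complex.I * deriv (fun s => Φ x s) t =
        (β : ℂ) * deriv (fun y => deriv (fun y' => Φ y' t) y) x
        + (α₁ : ℂ) * ((‖Φ x t‖ ^ 2 + ‖Ψ x t‖ ^ 2 : ℝ) : ℂ) * Φ x t)
    (hψ : ∀ x t, ψ x t = Ψ x t * Complex.cos ((Γ * t : ℝ) : ℂ)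
        + Complex.I * Φ x t * Complex.sin ((Γ * t : ℝ) : ℂ))
    (hφ : ∀ x t, φ x t = Φ x t * Complex.cos ((Γ * t : ℝ) : ℂ)
        + Complex.I * Ψ x t * Complex.sin ((Γ * t : ℝ) : ℂ)) :
    (∀ x t, Complex.I * deriv (fun s => ψ x s) t =
        (β : ℂ) * deriv (fun y => deriv (fun y' => ψ y' t) y) x
        + (α₁ : ℂ) * ((‖ψ x t‖ ^ 2 + ‖φ x t‖ ^ 2 : ℝ) : ℂ) * ψ x t
        - (Γ : ℂ) * φ x t) ∧
    (∀ x t, Complex.I * deriv (fun s => φ x s) t =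
        (β : ℂ) * deriv (fun y => deriv (fun y' => φ y' t) y) x
        + (α₁ : ℂ) * ((‖φ x t‖ ^ 2 + ‖ψ x t‖ ^ 2 : ℝ) : ℂ) * φ x t
        - (Γ : ℂ) * ψ x t) :=
  ⟨main_aux β α₁ Γ Ψ Φ ψ φ hΨ hΦ hM1 hM2 hψ hφ,
   main_aux β α₁ Γ Φ Ψ φ ψ hΦ hΨ hM2 hM1 hφ hψ⟩
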